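/- arXiv:2010.07724 — 2 statements merged into one kernel-verified Lean document; each statement's English description precedes it below -/
import Mathlib

section
/- Let Θ ⊂ ℝ³ be a compact set with nonempty interior, Ω = ℝ³ ∖ Θ, and let Ψ : ℝ³ → [0,1] be a C^∞ function with bounded derivatives of all orders, Ψ = 0 on a neighborhood of Θ, and Ψ = 1 outside a compact set. Let Q : ℝ³ → ℝ be a C² positive radial function solving −Q + ΔQ + Q³ = 0 on ℝ³, with constants a, C₀ > 0 such that for all |x| > 1: |Q(x) − (a/|x|)e^{−|x|}| ≤ C₀ e^{−|x|}/|x|^{3/2} and |∇Q(x)| + |∇²Q(x)| ≤ C₀ e^{−|x|}/|x|. Assume the stability property: there is η₀ > 0 and a function ε̂ : (0, η₀) → (0, ∞) with ε̂(η) → 0 as η → 0 such that every v : ℝ³ → ℂ with v ∈ L² ∩ L⁴, ∇v ∈ L², and | ‖v‖_{L⁴} − ‖Q‖_{L⁴} | + | ‖v‖_{L²} − ‖Q‖_{L²} | + | ‖∇v‖_{L²} − ‖∇Q‖_{L²} | ≤ η admits θ₀ ∈ ℝ, x₀ ∈ ℝ³ with ‖v − e^{iθ₀}Q(·−x₀)‖_{H¹(ℝ³)}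 ≤ ε̂(η). Then there is a function ε̃ : (0, δ₀) → (0, ∞) with ε̃(δ) → 0 as δ → 0 such that for every u ∈ H¹₀(Ω) with M[u] = M[Q], E[u] = E[Q] and δ(u) sufficiently small, there exist X₀ ∈ ℝ³ and θ₀ ∈ ℝ such that e^{−iθ₀} u(x) = Q(x − X₀) Ψ(x) + h(x) with h ∈ H¹₀(Ω) and ‖h‖_{H¹(ℝ³)} ≤ ε̃(δ(u)); moreover |X₀| → ∞ as δ(u) → 0. -/
noncomputable section

open MeasureTheory Real Filter Set

abbrev R3 : Type := EuclideanSpace ℝ (Fin 3)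

/-- The Euclidean Laplacian of a real-valued function on ℝ³. -/
def lap (f : R3 → ℝ) (x : R3) : ℝ :=
  ∑ i : Fin 3,
    fderiv ℝ (fun y => fderiv ℝ f y (EuclideanSpace.single i 1)) x (EuclideanSpace.single i 1)

/-- Membership of (the extension by zero of) a function in H¹₀(Ω) ∩ L⁴, Ω = ℝ³ ∖ Θ. -/
def MemH10 (Θ : Set R3) (u : R3 → ℂ) : Prop :=
  Differentiable ℝ u ∧ Integrable (fun x => ‖u x‖ ^ 2) ∧
    Integrable (fun x => ‖u x‖ ^ 4) ∧ Integrable (fun x => ‖fderiv ℝ u x‖ ^ 2) ∧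
    (∀ᵐ x : R3, x ∈ Θ → u x = 0)

/-- Mass. -/
def Mass (u : R3 → ℂ) : ℝ := ∫ x : R3, ‖u x‖ ^ 2

/-- Energy. -/
def Energy (u : R3 → ℂ) : ℝ :=
  (1 / 2) * (∫ x : R3, ‖fderiv ℝ u x‖ ^ 2) - (1 / 4) * ∫ x : R3, ‖u x‖ ^ 4

/-- Distance of the gradient norm to that of Q. -/
def delta (Q : R3 → ℝ) (u : R3 → ℂ) : ℝ :=
  |(∫ x : R3, ‖fderiv ℝ Q x‖ ^ 2) - ∫ x : R3, ‖fderiv ℝ u x‖ ^ 2|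

/-- Square of the H¹(ℝ³) norm. -/
def H1sq (u : R3 → ℂ) : ℝ := (∫ x : R3, ‖u x‖ ^ 2) + ∫ x : R3, ‖fderiv ℝ u x‖ ^ 2

/-- L² norm. -/
def L2norm (u : R3 → ℂ) : ℝ := (∫ x : R3, ‖u x‖ ^ 2) ^ ((1 : ℝ) / 2)

/-- L⁴ norm. -/
def L4norm (u : R3 → ℂ) : ℝ := (∫ x : R3, ‖u x‖ ^ 4) ^ ((1 : ℝ) / 4)

/-- L² norm of the gradient. -/
def L2gradNorm (u : R3 → ℂ) : ℝ := (∫ x : R3, ‖fderiv ℝ u x‖ ^ 2) ^ ((1 : ℝ) / 2)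

/-! ### Auxiliary lemmas -/

lemma integrable_exp_neg_norm : Integrable (fun x : R3 => Real.exp (-‖x‖)) := by
  have h3 : ((Module.finrank ℝ R3 : ℝ)) < (4:ℝ) := by
    rw [finrank_euclideanSpace]; norm_num
  refine ((integrable_one_add_norm (μ := volume) (E := R3) h3).const_mul 400).mono'
    ((Real.continuous_exp.comp continuous_norm.neg).aestronglyMeasurable) ?_
  refine Eventually.of_forall fun x => ?_
  have ht : (0:ℝ) ≤ ‖x‖ := norm_nonneg x
  set t := ‖x‖ with htdef
  rw [Real.norm_of_nonneg (Real.exp_nonneg _)]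
  have hsum : 1 + t + t^2/2 + t^3/6 + t^4/24 ≤ Real.exp t := by
    have h := Real.sum_le_exp_of_nonneg ht 5
    simp [Finset.sum_range_succ, Nat.factorial] at h
    nlinarith [h]
  rw [show (1 + t) ^ (-(4:ℝ)) = ((1+t)^(4:ℕ))⁻¹ by
    rw [Real.rpow_neg (by linarith), show (4:ℝ) = ((4:ℕ):ℝ) by norm_num, Real.rpow_natCast]]
  have hpos : (0:ℝ) < (1+t)^(4:ℕ) := by positivity
  rw [← div_eq_mul_inv, le_div_iff₀ hpos, Real.exp_neg,
    inv_mul_le_iff₀ (Real.exp_pos t)]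
  nlinarith [hsum, ht]

lemma sqrt2_triangle (a b c d : ℝ) (ha : 0 ≤ a) (hb : 0 ≤ b) (hc : 0 ≤ c) (hd : 0 ≤ d) :
    Real.sqrt ((a+c)^2 + (b+d)^2) ≤ Real.sqrt (a^2+b^2) + Real.sqrt (c^2+d^2) := by
  set X := Real.sqrt (a^2+b^2) with hX
  set Y := Real.sqrt (c^2+d^2) with hY
  have hXnn : 0 ≤ X := Real.sqrt_nonneg _
  have hYnn : 0 ≤ Y := Real.sqrt_nonneg _
  have hX2 : X^2 = a^2+b^2 := Real.sq_sqrt (by positivity)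
  have hY2 : Y^2 = c^2+d^2 := Real.sq_sqrt (by positivity)
  have hXY : a*c + b*d ≤ X*Y := by
    nlinarith [sq_nonneg (a*d - b*c), sq_nonneg (X*Y - (a*c+b*d)), mul_nonneg hXnn hYnn]
  have h1 : (a+c)^2 + (b+d)^2 ≤ (X+Y)^2 := by nlinarith [hXY, hX2, hY2]
  calc Real.sqrt ((a+c)^2 + (b+d)^2) ≤ Real.sqrt ((X+Y)^2) := Real.sqrt_le_sqrt h1
    _ = X + Y := Real.sqrt_sq (by linarith)

lemma rpow_subadd {p : ℝ} (x y : ℝ) (hx : 0 ≤ x) (hy : 0 ≤ y) (hp : 0 ≤ p) (hp1 : p ≤ 1) :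
    (x+y)^p ≤ x^p + y^p := by
  have h := NNReal.rpow_add_le_add_rpow (x.toNNReal) (y.toNNReal) hp hp1
  have h2 := NNReal.coe_le_coe.2 h
  push_cast [Real.coe_toNNReal x hx, Real.coe_toNNReal y hy] at h2
  exact h2

lemma abs_rpow_sub_le {p : ℝ} (x y : ℝ) (hx : 0 ≤ x) (hy : 0 ≤ y) (hp : 0 ≤ p) (hp1 : p ≤ 1) :
    |x^p - y^p| ≤ |x-y|^p := by
  have key : ∀ u v : ℝ, 0 ≤ u → 0 ≤ v → v ≤ u → u^p - v^p ≤ (u-v)^p := by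
    intro u v hu hv huv
    have h := rpow_subadd v (u - v) hv (by linarith) hp hp1
    have : v + (u - v) = u := by ring
    rw [this] at h
    linarith
  rcases le_total y x with h | h
  · rw [abs_of_nonneg (by linarith : (0:ℝ) ≤ x - y)]
    rw [abs_le]
    constructor
    · have : (0:ℝ) ≤ (x-y)^p := Real.rpow_nonneg (by linarith) p
      have hmono : y^p ≤ x^p := Real.rpow_le_rpow hy h hp
      linarith
    · exact key x y hx hy h
  · rw [abs_of_nonpos (by linarith : x - y ≤ 0), show -(x-y) = y - x by ring, abs_le]
    have hk := key y x hy hx h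
    have hmono : x^p ≤ y^p := Real.rpow_le_rpow hx h hp
    have hnn : (0:ℝ) ≤ (y-x)^p := Real.rpow_nonneg (by linarith) p
    constructor <;> linarith

lemma sqrtI2_add_le {E : Type*} [NormedAddCommGroup E] (f g : R3 → E)
    (hf : AEStronglyMeasurable f (volume : Measure R3)) (hg : AEStronglyMeasurable g volume)
    (hf2 : Integrable (fun x => ‖f x‖^2)) (hg2 : Integrable (fun x => ‖g x‖^2)) :
    Real.sqrt (∫ x, ‖f x + g x‖^2) ≤
      Real.sqrt (∫ x, ‖f x‖^2) + Real.sqrt (∫ x, ‖g x‖^2) := by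
  set A := Real.sqrt (∫ x, ‖f x‖^2) with hA
  set B := Real.sqrt (∫ x, ‖g x‖^2) with hB
  have hAnn : 0 ≤ A := Real.sqrt_nonneg _
  have hBnn : 0 ≤ B := Real.sqrt_nonneg _
  have hA2 : A^2 = ∫ x, ‖f x‖^2 := Real.sq_sqrt (integral_nonneg fun x => by positivity)
  have hB2 : B^2 = ∫ x, ‖g x‖^2 := Real.sq_sqrt (integral_nonneg fun x => by positivity)
  have hfL : MemLp f 2 volume := (memLp_two_iff_integrable_sq_norm hf).2 hf2
  have hgL : MemLp g 2 volume := (memLp_two_iff_integrable_sq_norm hg).2 hg2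
  have hHol : ∫ x, ‖f x‖ * ‖g x‖ ≤ A * B := by
    have h2 : (2:ℝ).HolderConjugate 2 := Real.HolderConjugate.two_two
    have hof : (ENNReal.ofReal (2:ℝ)) = 2 := by norm_num [ENNReal.ofReal_ofNat]
    have hfL' : MemLp (fun x => ‖f x‖) (ENNReal.ofReal (2:ℝ)) volume := by rw [hof]; exact hfL.norm
    have hgL' : MemLp (fun x => ‖g x‖) (ENNReal.ofReal (2:ℝ)) volume := by rw [hof]; exact hgL.norm
    have := integral_mul_le_Lp_mul_Lq_of_nonneg (μ := volume) h2
      (Eventually.of_forall fun x => norm_nonneg (f x))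
      (Eventually.of_forall fun x => norm_nonneg (g x))
      hfL' hgL'
    calc ∫ x, ‖f x‖ * ‖g x‖ ≤ (∫ x, ‖f x‖ ^ (2:ℝ)) ^ (1/2:ℝ) * (∫ x, ‖g x‖ ^ (2:ℝ)) ^ (1/2:ℝ) := this
      _ = A * B := by
          rw [hA, hB, Real.sqrt_eq_rpow, Real.sqrt_eq_rpow]
          norm_num [show ∀ y : E, ‖y‖ ^ (2:ℝ) = ‖y‖^(2:ℕ) from fun y => by
            rw [show (2:ℝ) = ((2:ℕ):ℝ) by norm_num, Real.rpow_natCast]]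
  have hmul_int : Integrable (fun x => ‖f x‖ * ‖g x‖) := by
    refine ((hf2.add hg2).div_const 2).mono' (hf.norm.mul hg.norm) ?_
    refine Eventually.of_forall fun x => ?_
    simp only [Pi.add_apply]
    rw [Real.norm_of_nonneg (by positivity)]
    nlinarith [sq_nonneg (‖f x‖ - ‖g x‖), norm_nonneg (f x), norm_nonneg (g x)]
  have hle : (∫ x, ‖f x + g x‖^2) ≤ A^2 + 2*(A*B) + B^2 := by
    have hdom : (∫ x, ‖f x + g x‖^2) ≤ ∫ x, (‖f x‖^2 + 2*(‖f x‖*‖g x‖) + ‖g x‖^2) := by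
      refine integral_mono_of_nonneg (Eventually.of_forall fun x => by positivity)
        ((hf2.add (hmul_int.const_mul 2)).add hg2) (Eventually.of_forall fun x => ?_)
      simp only [Pi.add_apply]
      have := norm_add_le (f x) (g x)
      nlinarith [norm_nonneg (f x), norm_nonneg (g x), norm_nonneg (f x + g x)]
    rw [integral_add (f := fun x => ‖f x‖^2 + 2*(‖f x‖*‖g x‖)) (g := fun x => ‖g x‖^2)
      (hf2.add (hmul_int.const_mul 2)) hg2,
      integral_add hf2 (hmul_int.const_mul 2), integral_const_mul] at hdom
    rw [hA2, hB2]
    linarith [hdom, hHol]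
  calc Real.sqrt (∫ x, ‖f x + g x‖^2) ≤ Real.sqrt ((A+B)^2) := by
        apply Real.sqrt_le_sqrt; nlinarith [hle]
    _ = A + B := Real.sqrt_sq (by linarith)

lemma sqrtH1_add_le (f g : R3 → ℂ) (hfd : Differentiable ℝ f) (hgd : Differentiable ℝ g)
    (hf2 : Integrable (fun x => ‖f x‖^2)) (hg2 : Integrable (fun x => ‖g x‖^2))
    (hf2' : Integrable (fun x => ‖fderiv ℝ f x‖^2))
    (hg2' : Integrable (fun x => ‖fderiv ℝ g x‖^2)) :
    Real.sqrt (H1sq (fun x => f x + g x)) ≤ Real.sqrt (H1sq f) + Real.sqrt (H1sq g) := by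
  set a := Real.sqrt (∫ x, ‖f x‖^2)
  set b := Real.sqrt (∫ x, ‖fderiv ℝ f x‖^2)
  set c := Real.sqrt (∫ x, ‖g x‖^2)
  set d := Real.sqrt (∫ x, ‖fderiv ℝ g x‖^2)
  have hann : 0 ≤ a := Real.sqrt_nonneg _
  have hbnn : 0 ≤ b := Real.sqrt_nonneg _
  have hcnn : 0 ≤ c := Real.sqrt_nonneg _
  have hdnn : 0 ≤ d := Real.sqrt_nonneg _
  have ha2 : a^2 = ∫ x, ‖f x‖^2 := Real.sq_sqrt (integral_nonneg fun x => by positivity)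
  have hb2 : b^2 = ∫ x, ‖fderiv ℝ f x‖^2 := Real.sq_sqrt (integral_nonneg fun x => by positivity)
  have hc2 : c^2 = ∫ x, ‖g x‖^2 := Real.sq_sqrt (integral_nonneg fun x => by positivity)
  have hd2 : d^2 = ∫ x, ‖fderiv ℝ g x‖^2 := Real.sq_sqrt (integral_nonneg fun x => by positivity)
  have h1 : Real.sqrt (∫ x, ‖f x + g x‖^2) ≤ a + c :=
    sqrtI2_add_le f g hfd.continuous.aestronglyMeasurable hgd.continuous.aestronglyMeasurable hf2 hg2
  have hderiv_eq : (∫ x, ‖fderiv ℝ (fun y => f y + g y) x‖^2)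
      = ∫ x, ‖fderiv ℝ f x + fderiv ℝ g x‖^2 := by
    refine integral_congr_ae (Eventually.of_forall fun x => ?_)
    simp only []
    rw [fderiv_fun_add (hfd x) (hgd x)]
  have h2 : Real.sqrt (∫ x, ‖fderiv ℝ (fun y => f y + g y) x‖^2) ≤ b + d := by
    rw [hderiv_eq]
    exact sqrtI2_add_le _ _ (measurable_fderiv ℝ f).aestronglyMeasurable
      (measurable_fderiv ℝ g).aestronglyMeasurable hf2' hg2'
  have hH : H1sq (fun x => f x + g x) ≤ (a+c)^2 + (b+d)^2 := by
    have e1 : (∫ x, ‖f x + g x‖^2) ≤ (a+c)^2 := by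
      have hnn : (0:ℝ) ≤ ∫ x, ‖f x + g x‖^2 := integral_nonneg fun x => by positivity
      nlinarith [Real.sq_sqrt hnn, Real.sqrt_nonneg (∫ x, ‖f x + g x‖^2), h1]
    have e2 : (∫ x, ‖fderiv ℝ (fun y => f y + g y) x‖^2) ≤ (b+d)^2 := by
      have hnn : (0:ℝ) ≤ ∫ x, ‖fderiv ℝ (fun y => f y + g y) x‖^2 :=
        integral_nonneg fun x => by positivity
      nlinarith [Real.sq_sqrt hnn, Real.sqrt_nonneg (∫ x, ‖fderiv ℝ (fun y => f y + g y) x‖^2), h2]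
    unfold H1sq; exact add_le_add e1 e2
  have hfin : Real.sqrt (H1sq (fun x => f x + g x)) ≤ Real.sqrt ((a+c)^2 + (b+d)^2) :=
    Real.sqrt_le_sqrt hH
  refine hfin.trans ?_
  have := sqrt2_triangle a b c d hann hbnn hcnn hdnn
  have hf1 : Real.sqrt (H1sq f) = Real.sqrt (a^2 + b^2) := by unfold H1sq; rw [ha2, hb2]
  have hg1 : Real.sqrt (H1sq g) = Real.sqrt (c^2 + d^2) := by unfold H1sq; rw [hc2, hd2]
  rw [hf1, hg1]; exact this

lemma norm_ofReal_comp (L : R3 →L[ℝ] ℝ) : ‖Complex.ofRealCLM.comp L‖ = ‖L‖ :=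
  Complex.ofRealLI.norm_toContinuousLinearMap_comp

lemma fderiv_ofReal_comp {f : R3 → ℝ} {x : R3} (hf : DifferentiableAt ℝ f x) :
    fderiv ℝ (fun y => ((f y : ℝ) : ℂ)) x = Complex.ofRealCLM.comp (fderiv ℝ f x) :=
  (Complex.ofRealCLM.hasFDerivAt.comp x hf.hasFDerivAt).fderiv

lemma norm_fderiv_ofReal {f : R3 → ℝ} (hf : Differentiable ℝ f) (x : R3) :
    ‖fderiv ℝ (fun y => ((f y : ℝ) : ℂ)) x‖ = ‖fderiv ℝ f x‖ := by
  rw [fderiv_ofReal_comp (hf x), norm_ofReal_comp]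

lemma zero_on_interior {Θ : Set R3} {u : R3 → ℂ} (hu : Continuous u)
    (h : ∀ᵐ x : R3, x ∈ Θ → u x = 0) : ∀ x ∈ interior Θ, u x = 0 := by
  intro x hx
  by_contra hne
  have hVopen : IsOpen (interior Θ ∩ u ⁻¹' ({0}ᶜ)) :=
    isOpen_interior.inter (isOpen_compl_singleton.preimage hu)
  have hVsub : (interior Θ ∩ u ⁻¹' ({0}ᶜ)) ⊆ {y | ¬ (y ∈ Θ → u y = 0)} := by
    rintro y ⟨hy1, hy2⟩ hcontra
    exact hy2 (hcontra (interior_subset hy1))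
  have hnull : volume {y : R3 | ¬ (y ∈ Θ → u y = 0)} = 0 := ae_iff.1 h
  have hpos := hVopen.measure_pos volume ⟨x, hx, hne⟩
  exact absurd (le_antisymm ((measure_mono hVsub).trans hnull.le) (by positivity)) hpos.ne'


lemma integrable_of_bound {F u2 : R3 → ℝ} (hFm : AEStronglyMeasurable F (volume : Measure R3))
    (hu2 : Integrable u2) (K C : ℝ)
    (hb : ∀ x, |F x| ≤ K * u2 x + C * Real.exp (-‖x‖)) : Integrable F :=
  ((hu2.const_mul K).add (integrable_exp_neg_norm.const_mul C)).mono' hFm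
    (Eventually.of_forall fun x => by
      simpa [Real.norm_eq_abs, Pi.add_apply] using hb x)

lemma integrable_of_exp_bound {F : R3 → ℝ} (hFm : AEStronglyMeasurable F (volume : Measure R3))
    (C : ℝ) (hb : ∀ x, |F x| ≤ C * Real.exp (-‖x‖)) : Integrable F :=
  (integrable_exp_neg_norm.const_mul C).mono' hFm
    (Eventually.of_forall fun x => by simpa [Real.norm_eq_abs] using hb x)

lemma sq_bound_of_le {s pn B e : ℝ} (h1 : s ≤ pn + B * e) (hs : 0 ≤ s) (hp : 0 ≤ pn)
    (hB : 0 ≤ B) (he0 : 0 ≤ e) (he1 : e ≤ 1) : s^2 ≤ 2 * pn^2 + 2 * B^2 * e := by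
  have h2 : s^2 ≤ (pn + B*e)^2 := by nlinarith
  have h3 : (pn + B*e)^2 ≤ 2*pn^2 + 2*(B*e)^2 := by nlinarith [sq_nonneg (pn - B*e)]
  have h4 : (B*e)^2 ≤ B^2 * e := by
    have key : 0 ≤ B^2 * e * (1 - e) :=
      mul_nonneg (mul_nonneg (sq_nonneg B) he0) (by linarith)
    nlinarith [key]
  linarith

lemma exp_neg_norm_le_one (x : R3) : Real.exp (-‖x‖) ≤ 1 := by
  have := Real.exp_le_exp.2 (neg_nonpos.2 (norm_nonneg x))
  simpa using this

lemma quartic_bound (p q : ℝ) (hp : 0 ≤ p) (hq : 0 ≤ q) : (p+q)^4 ≤ 8*(p^4 + q^4) := by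
  nlinarith [sq_nonneg (p-q), sq_nonneg (p+q), sq_nonneg (p^2 - q^2), sq_nonneg (p^2+q^2),
    sq_nonneg (p*q), mul_nonneg hp hq, mul_nonneg (mul_nonneg hp hp) (mul_nonneg hq hq)]

lemma norm_exp_I (θ : ℝ) : ‖Complex.exp ((θ:ℂ) * Complex.I)‖ = 1 := by
  simp [Complex.norm_exp]

lemma norm_exp_neg_I (θ : ℝ) : ‖Complex.exp (-(θ:ℂ) * Complex.I)‖ = 1 := by
  simp [Complex.norm_exp]

set_option maxHeartbeats 4000000 in
theorem decomposition_near_truncated_ground_state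
    (Θ : Set R3) (hΘ : IsCompact Θ) (hΘint : (interior Θ).Nonempty)
    (Ψ : R3 → ℝ) (hΨC : ContDiff ℝ (⊤ : ℕ∞) Ψ)
    (hΨbdd : ∀ n : ℕ, ∃ Cn : ℝ, ∀ x : R3, ‖iteratedFDeriv ℝ n Ψ x‖ ≤ Cn)
    (hΨrange : ∀ x : R3, Ψ x ∈ Set.Icc (0 : ℝ) 1)
    (hΨ0 : ∃ U : Set R3, IsOpen U ∧ Θ ⊆ U ∧ ∀ x ∈ U, Ψ x = 0)
    (hΨ1 : ∃ K : Set R3, IsCompact K ∧ ∀ x ∉ K, Ψ x = 1)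
    (Q : R3 → ℝ)
    (hQC2 : ContDiff ℝ 2 Q) (hQpos : ∀ x : R3, 0 < Q x)
    (hQrad : ∃ q : ℝ → ℝ, ∀ x : R3, Q x = q ‖x‖)
    (heq : ∀ x : R3, -Q x + lap Q x + (Q x) ^ 3 = 0)
    (a C₀ : ℝ) (ha : 0 < a) (hC₀ : 0 < C₀)
    (hdecay : ∀ x : R3, 1 < ‖x‖ →
      |Q x - (a / ‖x‖) * Real.exp (-‖x‖)| ≤ C₀ * Real.exp (-‖x‖) / ‖x‖ ^ ((3 : ℝ) / 2) ∧
      ‖fderiv ℝ Q x‖ + ‖fderiv ℝ (fderiv ℝ Q) x‖ ≤ C₀ * Real.exp (-‖x‖) / ‖x‖)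
    -- the stability property of the Gagliardo-Nirenberg minimizer
    (hstab : ∃ η₀ > (0 : ℝ), ∃ εhat : ℝ → ℝ,
      Tendsto εhat (nhdsWithin 0 (Set.Ioi 0)) (nhds 0) ∧
      ∀ η : ℝ, 0 < η → η < η₀ → ∀ v : R3 → ℂ,
        Differentiable ℝ v → Integrable (fun x => ‖v x‖ ^ 2) →
        Integrable (fun x => ‖v x‖ ^ 4) → Integrable (fun x => ‖fderiv ℝ v x‖ ^ 2) →
        |L4norm v - L4norm (fun x => (Q x : ℂ))| + |L2norm v - L2norm (fun x => (Q x : ℂ))| +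
          |L2gradNorm v - L2gradNorm (fun x => (Q x : ℂ))| ≤ η →
        ∃ (θ₀ : ℝ) (x₀ : R3),
          Real.sqrt (H1sq (fun x => v x - Complex.exp ((θ₀ : ℂ) * Complex.I) * (Q (x - x₀) : ℂ)))
            ≤ εhat η) :
    ∃ δ₀ > (0 : ℝ), ∃ εtil Rtil : ℝ → ℝ,
      Tendsto εtil (nhdsWithin 0 (Set.Ioi 0)) (nhds 0) ∧
      Tendsto Rtil (nhdsWithin 0 (Set.Ioi 0)) atTop ∧
      ∀ u : R3 → ℂ, MemH10 Θ u →
        Mass u = Mass (fun x => (Q x : ℂ)) →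
        Energy u = Energy (fun x => (Q x : ℂ)) →
        delta Q u < δ₀ →
        ∃ (X₀ : R3) (θ₀ : ℝ) (h : R3 → ℂ),
          (∀ x : R3, Complex.exp (-(θ₀ : ℂ) * Complex.I) * u x
            = ((Q (x - X₀) * Ψ x : ℝ) : ℂ) + h x) ∧
          MemH10 Θ h ∧
          Real.sqrt (H1sq h) ≤ εtil (delta Q u) ∧
          Rtil (delta Q u) ≤ ‖X₀‖ := by
  classical
  obtain ⟨p, hp⟩ := hΘint
  obtain ⟨rB, hrB, hball⟩ : ∃ rB > (0:ℝ), Metric.closedBall p rB ⊆ interior Θ := by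
    rcases Metric.isOpen_iff.1 isOpen_interior p hp with ⟨ε, hε, hsub⟩
    exact ⟨ε/2, by linarith, (Metric.closedBall_subset_ball (by linarith)).trans hsub⟩
  obtain ⟨U, hUopen, hΘU, hΨU⟩ := hΨ0
  obtain ⟨K, hKcomp, hΨK⟩ := hΨ1
  obtain ⟨η₀, hη₀, εhat, hεhat, hstab'⟩ := hstab
  have hQcont : Continuous Q := hQC2.continuous
  have hQdiff : Differentiable ℝ Q := hQC2.differentiable (by norm_num)
  have hQ'cont : Continuous (fderiv ℝ Q) := hQC2.continuous_fderiv (by norm_num)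
  have hΨdiff : Differentiable ℝ Ψ := hΨC.differentiable (by simp)
  -- global exponential bounds for Q and its derivative
  obtain ⟨CQ, hCQ1, hCQb⟩ : ∃ CQ : ℝ, 1 ≤ CQ ∧ ∀ y : R3, Q y ≤ CQ * Real.exp (-‖y‖) := by
    obtain ⟨z, hz, hzmax⟩ := (isCompact_closedBall (0:R3) 1).exists_isMaxOn
      (Metric.nonempty_closedBall.2 zero_le_one) hQcont.continuousOn
    refine ⟨max 1 (max (a + C₀) (Real.exp 1 * Q z)), le_max_left _ _, fun y => ?_⟩
    have hMnn : (0:ℝ) ≤ max 1 (max (a + C₀) (Real.exp 1 * Q z)) :=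
      le_trans zero_le_one (le_max_left _ _)
    rcases le_or_gt ‖y‖ 1 with hy | hy
    · have h1 : Q y ≤ Q z := hzmax (by simpa [Metric.mem_closedBall, dist_zero_right] using hy)
      have h2 : Real.exp (-(1:ℝ)) ≤ Real.exp (-‖y‖) := Real.exp_le_exp.2 (by linarith)
      have h3 : Real.exp 1 * Q z * Real.exp (-(1:ℝ)) = Q z := by
        rw [mul_comm (Real.exp 1) (Q z), mul_assoc, ← Real.exp_add]; simp
      have hM : Real.exp 1 * Q z ≤ max 1 (max (a + C₀) (Real.exp 1 * Q z)) :=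
        le_trans (le_max_right _ _) (le_max_right _ _)
      calc Q y ≤ Q z := h1
        _ = Real.exp 1 * Q z * Real.exp (-(1:ℝ)) := h3.symm
        _ ≤ max 1 (max (a + C₀) (Real.exp 1 * Q z)) * Real.exp (-‖y‖) :=
            mul_le_mul hM h2 (Real.exp_nonneg _) hMnn
    · have hdec := (hdecay y hy).1
      have h0y : (0:ℝ) < ‖y‖ := by linarith
      have hQle : Q y ≤ (a / ‖y‖) * Real.exp (-‖y‖) + C₀ * Real.exp (-‖y‖) / ‖y‖ ^ ((3:ℝ)/2) := by
        have h := (abs_le.1 hdec).2; linarith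
      have h1 : a / ‖y‖ ≤ a := by
        rw [div_le_iff₀ h0y]; nlinarith
      have h32 : (1:ℝ) ≤ ‖y‖ ^ ((3:ℝ)/2) := by
        calc (1:ℝ) = 1 ^ ((3:ℝ)/2) := (Real.one_rpow _).symm
          _ ≤ ‖y‖ ^ ((3:ℝ)/2) := Real.rpow_le_rpow zero_le_one (by linarith) (by norm_num)
      have h2 : C₀ * Real.exp (-‖y‖) / ‖y‖ ^ ((3:ℝ)/2) ≤ C₀ * Real.exp (-‖y‖) :=
        div_le_self (by positivity) h32
      have e1 : (a/‖y‖) * Real.exp (-‖y‖) ≤ a * Real.exp (-‖y‖) :=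
        mul_le_mul_of_nonneg_right h1 (Real.exp_nonneg _)
      have hfin : Q y ≤ (a + C₀) * Real.exp (-‖y‖) := by
        have : (a + C₀) * Real.exp (-‖y‖) = a * Real.exp (-‖y‖) + C₀ * Real.exp (-‖y‖) := by ring
        linarith
      refine hfin.trans (mul_le_mul_of_nonneg_right
        (le_trans (le_max_left _ _) (le_max_right _ _)) (Real.exp_nonneg _))
  have hCQ0 : (0:ℝ) < CQ := lt_of_lt_of_le one_pos hCQ1
  obtain ⟨CG, hCG0, hCGb⟩ : ∃ CG : ℝ, 0 ≤ CG ∧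
      ∀ y : R3, ‖fderiv ℝ Q y‖ ≤ CG * Real.exp (-‖y‖) := by
    obtain ⟨z, hz, hzmax⟩ := (isCompact_closedBall (0:R3) 1).exists_isMaxOn
      (Metric.nonempty_closedBall.2 zero_le_one) hQ'cont.norm.continuousOn
    refine ⟨max C₀ (Real.exp 1 * ‖fderiv ℝ Q z‖), le_trans hC₀.le (le_max_left _ _), fun y => ?_⟩
    have hMnn : (0:ℝ) ≤ max C₀ (Real.exp 1 * ‖fderiv ℝ Q z‖) := le_trans hC₀.le (le_max_left _ _)
    rcases le_or_gt ‖y‖ 1 with hy | hy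
    · have h1 : ‖fderiv ℝ Q y‖ ≤ ‖fderiv ℝ Q z‖ :=
        hzmax (by simpa [Metric.mem_closedBall, dist_zero_right] using hy)
      have h2 : Real.exp (-(1:ℝ)) ≤ Real.exp (-‖y‖) := Real.exp_le_exp.2 (by linarith)
      have h3 : Real.exp 1 * ‖fderiv ℝ Q z‖ * Real.exp (-(1:ℝ)) = ‖fderiv ℝ Q z‖ := by
        rw [mul_comm (Real.exp 1) _, mul_assoc, ← Real.exp_add]; simp
      calc ‖fderiv ℝ Q y‖ ≤ ‖fderiv ℝ Q z‖ := h1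
        _ = Real.exp 1 * ‖fderiv ℝ Q z‖ * Real.exp (-(1:ℝ)) := h3.symm
        _ ≤ max C₀ (Real.exp 1 * ‖fderiv ℝ Q z‖) * Real.exp (-‖y‖) :=
            mul_le_mul (le_max_right _ _) h2 (Real.exp_nonneg _) hMnn
    · have hdec := (hdecay y hy).2
      have h0y : (0:ℝ) < ‖y‖ := by linarith
      have h2 : C₀ * Real.exp (-‖y‖) / ‖y‖ ≤ C₀ * Real.exp (-‖y‖) :=
        div_le_self (by positivity) (by linarith)
      have hfin : ‖fderiv ℝ Q y‖ ≤ C₀ * Real.exp (-‖y‖) := by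
        have := norm_nonneg (fderiv ℝ (fderiv ℝ Q) y); linarith
      exact hfin.trans (mul_le_mul_of_nonneg_right (le_max_left _ _) (Real.exp_nonneg _))
  -- gradient bound for Ψ
  obtain ⟨C₁, hC₁b⟩ := hΨbdd 1
  have hC₁ : ∀ x : R3, ‖fderiv ℝ Ψ x‖ ≤ C₁ := by
    intro x
    have h := hC₁b x
    rwa [← norm_iteratedFDeriv_fderiv, norm_iteratedFDeriv_zero] at h
  have hC₁0 : 0 ≤ C₁ := le_trans (norm_nonneg _) (hC₁ 0)
  -- radius of K
  obtain ⟨ρ₀, hρ₀⟩ := hKcomp.isBounded.subset_closedBall 0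
  set ρ : ℝ := max ρ₀ 1 with hρdef
  have hρ1 : (1:ℝ) ≤ ρ := le_max_right _ _
  have hKρ : K ⊆ Metric.closedBall 0 ρ :=
    hρ₀.trans (Metric.closedBall_subset_closedBall (le_max_left _ _))
  -- the inf of Q over balls
  set m : ℝ → ℝ := fun R => sInf (Q '' Metric.closedBall 0 R) with hmdef
  have hm_le : ∀ R : ℝ, 0 ≤ R → ∀ y : R3, ‖y‖ ≤ R → m R ≤ Q y := by
    intro R hR y hy
    refine csInf_le ⟨0, ?_⟩ ⟨y, by simpa [Metric.mem_closedBall, dist_zero_right] using hy, rfl⟩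
    rintro v ⟨w, _, rfl⟩; exact (hQpos w).le
  have hm_pos : ∀ R : ℝ, 0 ≤ R → 0 < m R := by
    intro R hR
    obtain ⟨z, hz, hzmin⟩ := (isCompact_closedBall (0:R3) R).exists_isMinOn
      (Metric.nonempty_closedBall.2 hR) hQcont.continuousOn
    have hle : Q z ≤ m R := by
      refine le_csInf ⟨Q z, ⟨z, hz, rfl⟩⟩ ?_
      rintro v ⟨w, hw, rfl⟩; exact hzmin hw
    exact lt_of_lt_of_le (hQpos z) hle
  have hm_anti : ∀ R1 R2 : ℝ, 0 ≤ R1 → R1 ≤ R2 → m R2 ≤ m R1 := by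
    intro R1 R2 h0 h12
    refine csInf_le_csInf ⟨0, ?_⟩ ?_ (image_mono (f := Q) (Metric.closedBall_subset_closedBall h12))
    · rintro v ⟨w, _, rfl⟩; exact (hQpos w).le
    · exact ⟨Q 0, ⟨0, by simpa [Metric.mem_closedBall] using h0, rfl⟩⟩
  have hm_nonneg : ∀ R : ℝ, 0 ≤ R → 0 ≤ m R := fun R hR => (hm_pos R hR).le
  set c : ℝ := ‖p‖ + rB + 1 with hcdef
  have hc1 : (1:ℝ) ≤ c := by
    have := norm_nonneg p; simp only [hcdef]; linarith
  have hc0 : (0:ℝ) ≤ c := by linarith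
  set volB : ℝ := (volume (Metric.closedBall p rB)).toReal with hvolBdef
  have hvolB : 0 < volB := by
    apply ENNReal.toReal_pos
    · exact (Metric.measure_closedBall_pos volume p hrB).ne'
    · exact (MeasureTheory.measure_closedBall_lt_top).ne
  -- the eta function and the epsilon-hat envelope
  set ηf : ℝ → ℝ := fun t => (2*t) ^ ((1:ℝ)/4) + t ^ ((1:ℝ)/2) with hηfdef
  have hηf_pos : ∀ t : ℝ, 0 < t → 0 < ηf t := by
    intro t ht
    have h1 : (0:ℝ) < (2*t) ^ ((1:ℝ)/4) := Real.rpow_pos_of_pos (by linarith) _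
    have h2 : (0:ℝ) < t ^ ((1:ℝ)/2) := Real.rpow_pos_of_pos ht _
    simp only [hηfdef]; linarith
  have hηf_tendsto : Tendsto ηf (nhdsWithin 0 (Set.Ioi 0)) (nhdsWithin 0 (Set.Ioi 0)) := by
    have h1 : Tendsto (fun t : ℝ => (2*t) ^ ((1:ℝ)/4)) (nhds 0) (nhds 0) := by
      have hm : Tendsto (fun t : ℝ => 2*t) (nhds 0) (nhds 0) := by
        have : Continuous (fun t : ℝ => 2*t) := by continuity
        have := this.tendsto (0:ℝ)
        simpa using this
      have hc : ContinuousAt (fun s : ℝ => s ^ ((1:ℝ)/4)) 0 :=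
        Real.continuousAt_rpow_const 0 _ (Or.inr (by norm_num))
      have := hc.tendsto.comp hm
      simpa [Function.comp_def, Real.zero_rpow (by norm_num : ((1:ℝ)/4) ≠ 0)] using this
    have h2 : Tendsto (fun t : ℝ => t ^ ((1:ℝ)/2)) (nhds 0) (nhds 0) := by
      have hc : ContinuousAt (fun s : ℝ => s ^ ((1:ℝ)/2)) 0 :=
        Real.continuousAt_rpow_const 0 _ (Or.inr (by norm_num))
      have := hc.tendsto
      simpa [Real.zero_rpow (by norm_num : ((1:ℝ)/2) ≠ 0)] using this
    have hsum : Tendsto ηf (nhds 0) (nhds 0) := by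
      have := h1.add h2
      simpa [hηfdef] using this
    refine tendsto_nhdsWithin_of_tendsto_nhds_of_eventually_within _
      (hsum.mono_left nhdsWithin_le_nhds) ?_
    filter_upwards [self_mem_nhdsWithin] with t ht
    exact hηf_pos t ht
  set Ebar : ℝ → ℝ := fun t => |εhat (ηf t)| + t with hEdef
  have hEpos : ∀ t : ℝ, 0 < t → 0 < Ebar t := by
    intro t ht
    have := abs_nonneg (εhat (ηf t))
    simp only [hEdef]; linarith
  have hE_tendsto : Tendsto Ebar (nhdsWithin 0 (Set.Ioi 0)) (nhds 0) := by
    have h1 : Tendsto (fun t => εhat (ηf t)) (nhdsWithin 0 (Set.Ioi 0)) (nhds 0) :=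
      hεhat.comp hηf_tendsto
    have h2 : Tendsto (fun t => |εhat (ηf t)|) (nhdsWithin 0 (Set.Ioi 0)) (nhds 0) := by
      simpa using h1.abs
    have h3 : Tendsto (fun t : ℝ => t) (nhdsWithin 0 (Set.Ioi 0)) (nhds 0) :=
      tendsto_id.mono_left nhdsWithin_le_nhds
    simpa [hEdef] using h2.add h3
  -- the lower-bound radius function
  set S : ℝ → Set ℝ := fun t => {r : ℝ | 0 ≤ r ∧ (Ebar t)^2 < volB * (m (r + c))^2} with hSdef
  set Rbar : ℝ → ℝ := fun t => sSup ({0} ∪ S t) with hRbardef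
  have hSbdd : ∀ t : ℝ, 0 < t → BddAbove ({0} ∪ S t) := by
    intro t ht
    have hτ := hEpos t ht
    refine ⟨max 0 (Real.log (Real.sqrt volB * CQ / Ebar t)), ?_⟩
    rintro r (rfl | ⟨hr0, hr⟩)
    · exact le_max_left _ _
    · have hrc : (0:ℝ) ≤ r + c := by linarith
      have hmQ : m (r + c) ≤ CQ * Real.exp (-(r + c)) := by
        have hy : ‖(EuclideanSpace.single (0 : Fin 3) (r+c) : R3)‖ = r + c := by
          rw [EuclideanSpace.norm_single]; exact abs_of_nonneg hrc
        have h1 := hm_le (r+c) hrc (EuclideanSpace.single (0:Fin 3) (r+c)) (le_of_eq hy)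
        have h2 := hCQb (EuclideanSpace.single (0:Fin 3) (r+c))
        rw [hy] at h2
        exact h1.trans h2
      have hstep : (Ebar t)^2 < volB * (CQ * Real.exp (-(r+c)))^2 :=
        lt_of_lt_of_le hr (mul_le_mul_of_nonneg_left
          (pow_le_pow_left₀ (hm_nonneg _ hrc) hmQ 2) hvolB.le)
      have hA2 : (Real.sqrt volB * (CQ * Real.exp (-(r+c))))^2
          = volB * (CQ * Real.exp (-(r+c)))^2 := by
        have h := Real.sq_sqrt hvolB.le
        nlinarith [h]
      have hApos : 0 < Real.sqrt volB * (CQ * Real.exp (-(r+c))) := by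
        have := Real.sqrt_pos.2 hvolB
        positivity
      have hlt : Ebar t < Real.sqrt volB * (CQ * Real.exp (-(r+c))) := by
        nlinarith [hτ, hApos, hstep, hA2]
      have hlt2 : Ebar t < Real.sqrt volB * CQ * Real.exp (-r) := by
        have hee : Real.exp (-(r+c)) ≤ Real.exp (-r) := Real.exp_le_exp.2 (by linarith)
        have hcc : (0:ℝ) < Real.sqrt volB * CQ := by
          have := Real.sqrt_pos.2 hvolB; positivity
        nlinarith [hee, hcc]
      have hexp : Real.exp r < Real.sqrt volB * CQ / Ebar t := by
        rw [lt_div_iff₀ hτ]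
        have her : (0:ℝ) < Real.exp r := Real.exp_pos r
        have : Real.exp (-r) = (Real.exp r)⁻¹ := Real.exp_neg r
        rw [this] at hlt2
        calc Real.exp r * Ebar t < Real.exp r * (Real.sqrt volB * CQ * (Real.exp r)⁻¹) := by
              exact mul_lt_mul_of_pos_left hlt2 her
          _ = Real.sqrt volB * CQ := by field_simp
      have hlog : r < Real.log (Real.sqrt volB * CQ / Ebar t) := by
        rw [Real.lt_log_iff_exp_lt (by positivity)]
        exact hexp
      exact le_max_of_le_right hlog.le
  have hRbar_nonneg : ∀ t : ℝ, 0 < t → 0 ≤ Rbar t := by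
    intro t ht
    exact le_csSup (hSbdd t ht) (Or.inl rfl)
  have hRbar_tendsto : Tendsto Rbar (nhdsWithin 0 (Set.Ioi 0)) atTop := by
    rw [tendsto_atTop]
    intro M
    have hM'c : (0:ℝ) ≤ max M 0 + c := by
      have := le_max_right M 0; linarith
    have hm' : 0 < volB * (m (max M 0 + c))^2 :=
      mul_pos hvolB (pow_pos (hm_pos _ hM'c) 2)
    have hE2 : Tendsto (fun t => (Ebar t)^2) (nhdsWithin 0 (Set.Ioi 0)) (nhds 0) := by
      have := hE_tendsto.mul hE_tendsto
      simpa [pow_two] using this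
    filter_upwards [hE2.eventually (gt_mem_nhds hm'), self_mem_nhdsWithin] with t hlt ht
    have hmem : max M 0 ∈ ({0} : Set ℝ) ∪ S t := Or.inr ⟨le_max_right M 0, hlt⟩
    exact le_trans (le_max_left M 0) (le_csSup (hSbdd t ht) hmem)
  -- choice of δ₀ and the final data
  have hev : ∀ᶠ t in nhdsWithin (0:ℝ) (Set.Ioi 0), ηf t < η₀ :=
    (hηf_tendsto.mono_right nhdsWithin_le_nhds).eventually (gt_mem_nhds hη₀)
  obtain ⟨δ₁, hδ₁pos, hδ₁⟩ : ∃ δ₁ > (0:ℝ), ∀ t : ℝ, 0 < t → t < δ₁ → ηf t < η₀ := by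
    obtain ⟨δ₁, hδ₁pos, hsub⟩ := (nhdsGT_basis (0:ℝ)).eventually_iff.1 hev
    exact ⟨δ₁, hδ₁pos, fun t ht1 ht2 => hsub ⟨ht1, ht2⟩⟩
  set c₀ : ℝ := δ₁ / 2 with hc₀def
  have hc₀pos : 0 < c₀ := by simp only [hc₀def]; linarith
  have hc₀lt : c₀ < δ₁ := by simp only [hc₀def]; linarith
  set d' : ℝ → ℝ := fun δ => if δ ≤ 0 then c₀ else δ with hd'def
  set CK : ℝ := Real.sqrt ((volume (Metric.closedBall (0:R3) ρ)).toReal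
    * (CQ^2 + (CG + CQ*C₁)^2)) with hCKdef
  have hCKnn : 0 ≤ CK := Real.sqrt_nonneg _
  set εtil : ℝ → ℝ := fun δ => Ebar (d' δ) + CK * Real.exp (ρ - Rbar (d' δ)) with hεtildef
  set Rtil : ℝ → ℝ := fun δ => Rbar (d' δ) with hRtildef
  refine ⟨δ₁, hδ₁pos, εtil, Rtil, ?_, ?_, ?_⟩
  · -- εtil → 0
    have h2 : Tendsto (fun δ => Real.exp (ρ - Rbar δ)) (nhdsWithin 0 (Set.Ioi 0)) (nhds 0) := by
      apply Real.tendsto_exp_atBot.comp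
      have hneg : Tendsto (fun δ => -(Rbar δ)) (nhdsWithin 0 (Set.Ioi 0)) atBot :=
        tendsto_neg_atTop_atBot.comp hRbar_tendsto
      have := tendsto_atBot_add_const_left (nhdsWithin 0 (Set.Ioi 0)) ρ hneg
      simpa [sub_eq_add_neg] using this
    have hbase : Tendsto (fun δ => Ebar δ + CK * Real.exp (ρ - Rbar δ))
        (nhdsWithin 0 (Set.Ioi 0)) (nhds 0) := by
      have := hE_tendsto.add (h2.const_mul CK)
      simpa using this
    apply hbase.congr'
    filter_upwards [self_mem_nhdsWithin] with δ hδ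
    simp only [hεtildef, hd'def, if_neg (not_le.2 (mem_Ioi.1 hδ))]
  · -- Rtil → ∞
    apply hRbar_tendsto.congr'
    filter_upwards [self_mem_nhdsWithin] with δ hδ
    simp only [hRtildef, hd'def, if_neg (not_le.2 (mem_Ioi.1 hδ))]
  · -- main statement
    intro u hu hMass hEnergy hδsmall
    obtain ⟨hud, hu2, hu4, hugrad2, huΘ⟩ := hu
    set δ : ℝ := delta Q u with hδdef
    have hδ0 : 0 ≤ δ := abs_nonneg _
    set t : ℝ := d' δ with htdef
    have ht_pos : 0 < t := by
      simp only [htdef, hd'def]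
      split_ifs with hsp
      · exact hc₀pos
      · exact lt_of_not_ge hsp
    have ht_lt : t < δ₁ := by
      simp only [htdef, hd'def]
      split_ifs with hsp
      · exact hc₀lt
      · exact hδsmall
    have hδt : δ ≤ t := by
      simp only [htdef, hd'def]
      split_ifs with hsp
      · linarith
      · exact le_refl _
    -- the gradient integrals of the complexified Q agree with the real ones
    have hGQ : (∫ x : R3, ‖fderiv ℝ (fun y : R3 => ((Q y : ℝ) : ℂ)) x‖^2)
        = ∫ x : R3, ‖fderiv ℝ Q x‖^2 := by
      refine integral_congr_ae (Eventually.of_forall fun x => ?_)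
      simp only []
      rw [norm_fderiv_ofReal hQdiff x]
    -- the closeness condition for the stability property
    have hcond : |L4norm u - L4norm (fun x => (Q x : ℂ))|
        + |L2norm u - L2norm (fun x => (Q x : ℂ))|
        + |L2gradNorm u - L2gradNorm (fun x => (Q x : ℂ))| ≤ ηf t := by
      have hPu_nn : (0:ℝ) ≤ ∫ x : R3, ‖u x‖^4 := integral_nonneg fun x => by positivity
      have hPQ_nn : (0:ℝ) ≤ ∫ x : R3, ‖((Q x : ℝ):ℂ)‖^4 := integral_nonneg fun x => by positivity
      have hGu_nn : (0:ℝ) ≤ ∫ x : R3, ‖fderiv ℝ u x‖^2 := integral_nonneg fun x => by positivity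
      have hGQr_nn : (0:ℝ) ≤ ∫ x : R3, ‖fderiv ℝ Q x‖^2 := integral_nonneg fun x => by positivity
      have hMass2 : (∫ x : R3, ‖u x‖^2) = ∫ x : R3, ‖((Q x : ℝ):ℂ)‖^2 := hMass
      have hEn2 : (1/2)*(∫ x : R3, ‖fderiv ℝ u x‖^2) - (1/4)*(∫ x : R3, ‖u x‖^4)
          = (1/2)*(∫ x : R3, ‖fderiv ℝ (fun x : R3 => ((Q x : ℝ):ℂ)) x‖^2)
            - (1/4)*(∫ x : R3, ‖((Q x : ℝ):ℂ)‖^4) := hEnergy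
      rw [hGQ] at hEn2
      have hδeq : δ = |(∫ x : R3, ‖fderiv ℝ Q x‖^2) - ∫ x : R3, ‖fderiv ℝ u x‖^2| := rfl
      have habs1 : |(∫ x : R3, ‖u x‖^4) - (∫ x : R3, ‖((Q x : ℝ):ℂ)‖^4)| = 2*δ := by
        have heq4 : (∫ x : R3, ‖u x‖^4) - (∫ x : R3, ‖((Q x : ℝ):ℂ)‖^4)
            = 2*((∫ x : R3, ‖fderiv ℝ u x‖^2) - (∫ x : R3, ‖fderiv ℝ Q x‖^2)) := by linarith
        rw [heq4, abs_mul, hδeq, abs_sub_comm]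
        norm_num
      have ht1 : |L4norm u - L4norm (fun x => (Q x : ℂ))| ≤ (2*t) ^ ((1:ℝ)/4) := by
        have e1 : L4norm u = (∫ x : R3, ‖u x‖^4) ^ ((1:ℝ)/4) := rfl
        have e2 : L4norm (fun x => (Q x : ℂ)) = (∫ x : R3, ‖((Q x : ℝ):ℂ)‖^4) ^ ((1:ℝ)/4) := rfl
        rw [e1, e2]
        refine (abs_rpow_sub_le _ _ hPu_nn hPQ_nn (by norm_num) (by norm_num)).trans ?_
        rw [habs1]
        exact Real.rpow_le_rpow (by linarith) (by linarith) (by norm_num)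
      have ht2 : |L2norm u - L2norm (fun x => (Q x : ℂ))| = 0 := by
        have e1 : L2norm u = (∫ x : R3, ‖u x‖^2) ^ ((1:ℝ)/2) := rfl
        have e2 : L2norm (fun x => (Q x : ℂ)) = (∫ x : R3, ‖((Q x : ℝ):ℂ)‖^2) ^ ((1:ℝ)/2) := rfl
        rw [e1, e2, hMass2, sub_self, abs_zero]
      have ht3 : |L2gradNorm u - L2gradNorm (fun x => (Q x : ℂ))| ≤ t ^ ((1:ℝ)/2) := by
        have e1 : L2gradNorm u = (∫ x : R3, ‖fderiv ℝ u x‖^2) ^ ((1:ℝ)/2) := rfl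
        have e2 : L2gradNorm (fun x => (Q x : ℂ))
            = (∫ x : R3, ‖fderiv ℝ (fun x : R3 => ((Q x : ℝ):ℂ)) x‖^2) ^ ((1:ℝ)/2) := rfl
        rw [e1, e2, hGQ]
        refine (abs_rpow_sub_le _ _ hGu_nn hGQr_nn (by norm_num) (by norm_num)).trans ?_
        have habs2 : |(∫ x : R3, ‖fderiv ℝ u x‖^2) - ∫ x : R3, ‖fderiv ℝ Q x‖^2| = δ := by
          rw [hδeq, abs_sub_comm]
        rw [habs2]
        exact Real.rpow_le_rpow hδ0 hδt (by norm_num)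
      have hηeq : ηf t = (2*t) ^ ((1:ℝ)/4) + t ^ ((1:ℝ)/2) := rfl
      rw [hηeq]
      linarith [ht1, ht2, ht3, abs_nonneg (L2norm u - L2norm (fun x => (Q x : ℂ)))]
    obtain ⟨θ₀, x₀, hclose⟩ := hstab' (ηf t) (hηf_pos t ht_pos) (hδ₁ t ht_pos ht_lt)
      u hud hu2 hu4 hugrad2 hcond
    -- basic translate bounds
    have hexp_tr : ∀ x : R3, Real.exp (-‖x - x₀‖) ≤ Real.exp ‖x₀‖ * Real.exp (-‖x‖) := by
      intro x
      rw [← Real.exp_add]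
      apply Real.exp_le_exp.2
      have := norm_sub_norm_le x x₀
      linarith
    have hQTle : ∀ x : R3, Q (x - x₀) ≤ CQ * Real.exp ‖x₀‖ * Real.exp (-‖x‖) := by
      intro x
      calc Q (x - x₀) ≤ CQ * Real.exp (-‖x - x₀‖) := hCQb _
        _ ≤ CQ * (Real.exp ‖x₀‖ * Real.exp (-‖x‖)) :=
            mul_le_mul_of_nonneg_left (hexp_tr x) hCQ0.le
        _ = CQ * Real.exp ‖x₀‖ * Real.exp (-‖x‖) := by ring
    have hQT'le : ∀ x : R3, ‖fderiv ℝ Q (x - x₀)‖ ≤ CG * Real.exp ‖x₀‖ * Real.exp (-‖x‖) := by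
      intro x
      calc ‖fderiv ℝ Q (x - x₀)‖ ≤ CG * Real.exp (-‖x - x₀‖) := hCGb _
        _ ≤ CG * (Real.exp ‖x₀‖ * Real.exp (-‖x‖)) :=
            mul_le_mul_of_nonneg_left (hexp_tr x) hCG0
        _ = CG * Real.exp ‖x₀‖ * Real.exp (-‖x‖) := by ring
    -- derivative of the translate
    have haveQT : ∀ x : R3, HasFDerivAt (fun y : R3 => Q (y - x₀)) (fderiv ℝ Q (x - x₀)) x := by
      intro x
      have h1 : HasFDerivAt (fun y : R3 => y - x₀) (ContinuousLinearMap.id ℝ R3) x :=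
        (hasFDerivAt_id x).sub_const x₀
      have h2 := (hQdiff (x - x₀)).hasFDerivAt.comp x h1
      exact h2
    have hQTd : Differentiable ℝ (fun x : R3 => ((Q (x - x₀) : ℝ) : ℂ)) :=
      Complex.ofRealCLM.differentiable.comp (hQdiff.comp (differentiable_id.sub_const x₀))
    -- the function w from the stability conclusion
    set w : R3 → ℂ := fun x => u x - Complex.exp ((θ₀:ℂ) * Complex.I) * ((Q (x - x₀) : ℝ) : ℂ)
      with hwdef
    have hwd : Differentiable ℝ w := hud.sub ((differentiable_const _).mul hQTd)
    have hw_norm_le : ∀ x : R3, ‖w x‖ ≤ ‖u x‖ + CQ * Real.exp ‖x₀‖ * Real.exp (-‖x‖) := by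
      intro x
      refine (norm_sub_le _ _).trans ?_
      rw [norm_mul, norm_exp_I, one_mul, Complex.norm_real, Real.norm_eq_abs,
        abs_of_pos (hQpos _)]
      exact add_le_add (le_refl _) (hQTle x)
    have hw2 : Integrable (fun x => ‖w x‖^2) := by
      refine integrable_of_bound (hwd.continuous.norm.pow 2).aestronglyMeasurable hu2 2
        (2 * (CQ * Real.exp ‖x₀‖)^2) fun x => ?_
      rw [abs_of_nonneg (by positivity)]
      have := sq_bound_of_le (by simpa [mul_assoc] using hw_norm_le x) (norm_nonneg (w x))
        (norm_nonneg (u x)) (by positivity : (0:ℝ) ≤ CQ * Real.exp ‖x₀‖)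
        (Real.exp_nonneg _) (exp_neg_norm_le_one x)
      calc ‖w x‖^2 ≤ 2 * ‖u x‖^2 + 2 * (CQ * Real.exp ‖x₀‖)^2 * Real.exp (-‖x‖) := this
        _ = 2 * ‖u x‖^2 + 2 * (CQ * Real.exp ‖x₀‖)^2 * Real.exp (-‖x‖) := rfl
    have hwF : ∀ x : R3, fderiv ℝ w x = fderiv ℝ u x
        - Complex.exp ((θ₀:ℂ) * Complex.I) • (Complex.ofRealCLM.comp (fderiv ℝ Q (x - x₀))) := by
      intro x
      have h1 : HasFDerivAt (fun y : R3 => ((Q (y - x₀) : ℝ) : ℂ))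
          (Complex.ofRealCLM.comp (fderiv ℝ Q (x - x₀))) x :=
        Complex.ofRealCLM.hasFDerivAt.comp x (haveQT x)
      exact ((hud x).hasFDerivAt.sub (h1.const_mul _)).fderiv
    have hw'_le : ∀ x : R3, ‖fderiv ℝ w x‖
        ≤ ‖fderiv ℝ u x‖ + CG * Real.exp ‖x₀‖ * Real.exp (-‖x‖) := by
      intro x
      rw [hwF x]
      refine (norm_sub_le _ _).trans ?_
      have hns : ‖Complex.exp ((θ₀:ℂ) * Complex.I)
          • (Complex.ofRealCLM.comp (fderiv ℝ Q (x - x₀)))‖ = ‖fderiv ℝ Q (x - x₀)‖ := by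
        rw [norm_smul (Complex.exp ((θ₀:ℂ) * Complex.I))
          (Complex.ofRealCLM.comp (fderiv ℝ Q (x - x₀))), norm_exp_I, one_mul, norm_ofReal_comp]
      rw [hns]
      exact add_le_add (le_refl _) (hQT'le x)
    have hw2' : Integrable (fun x => ‖fderiv ℝ w x‖^2) := by
      refine integrable_of_bound
        (((measurable_fderiv ℝ w).norm.pow_const 2).aestronglyMeasurable) hugrad2 2
        (2 * (CG * Real.exp ‖x₀‖)^2) fun x => ?_
      rw [abs_of_nonneg (by positivity)]
      exact sq_bound_of_le (by simpa [mul_assoc] using hw'_le x) (norm_nonneg (fderiv ℝ w x))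
        (norm_nonneg (fderiv ℝ u x)) (by positivity : (0:ℝ) ≤ CG * Real.exp ‖x₀‖)
        (Real.exp_nonneg _) (exp_neg_norm_le_one x)
    -- H1 bound for w
    have hH1w_nn : 0 ≤ H1sq w :=
      add_nonneg (integral_nonneg fun x => by positivity) (integral_nonneg fun x => by positivity)
    have hEb : Real.sqrt (H1sq w) ≤ Ebar t := by
      refine hclose.trans ?_
      have : εhat (ηf t) ≤ |εhat (ηf t)| := le_abs_self _
      simp only [hEdef]
      linarith
    have hH1w : H1sq w ≤ (Ebar t)^2 := by
      have := Real.sq_sqrt hH1w_nn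
      nlinarith [Real.sqrt_nonneg (H1sq w), hEb]
    -- lower bound on ‖x₀‖
    have hx₀ : Rbar t ≤ ‖x₀‖ := by
      have hzero : ∀ x ∈ Metric.closedBall p rB, u x = 0 := fun x hx =>
        zero_on_interior hud.continuous huΘ x (hball hx)
      have hwB : ∀ x ∈ Metric.closedBall p rB, ‖w x‖ = Q (x - x₀) := by
        intro x hx
        have hwx : w x = - (Complex.exp ((θ₀:ℂ) * Complex.I) * ((Q (x - x₀) : ℝ):ℂ)) := by
          simp only [hwdef, hzero x hx]
          ring
        rw [hwx, norm_neg, norm_mul, norm_exp_I, one_mul, Complex.norm_real,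
          Real.norm_eq_abs, abs_of_pos (hQpos _)]
      have hx₀c_nn : (0:ℝ) ≤ ‖x₀‖ + c := add_nonneg (norm_nonneg _) hc0
      have hmono : ∀ x ∈ Metric.closedBall p rB, (m (‖x₀‖ + c))^2 ≤ ‖w x‖^2 := by
        intro x hx
        rw [hwB x hx]
        have hxb : ‖x - x₀‖ ≤ ‖x₀‖ + c := by
          have h1 : ‖x - p‖ ≤ rB := by
            simpa [Metric.mem_closedBall, dist_eq_norm] using hx
          have h2 : ‖x‖ ≤ ‖x - p‖ + ‖p‖ := by
            have := norm_add_le (x - p) p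
            simpa using this
          calc ‖x - x₀‖ ≤ ‖x‖ + ‖x₀‖ := norm_sub_le _ _
            _ ≤ ‖x₀‖ + c := by simp only [hcdef]; linarith
        have h1 : m (‖x₀‖ + c) ≤ Q (x - x₀) := hm_le _ hx₀c_nn _ hxb
        exact pow_le_pow_left₀ (hm_nonneg _ hx₀c_nn) h1 2
      have hchain : volB * (m (‖x₀‖ + c))^2 ≤ (Ebar t)^2 := by
        have hIB : ∫ _x in Metric.closedBall p rB, (m (‖x₀‖ + c))^2
            ≤ ∫ x in Metric.closedBall p rB, ‖w x‖^2 :=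
          setIntegral_mono_on (integrableOn_const measure_closedBall_lt_top.ne)
            hw2.integrableOn measurableSet_closedBall hmono
        rw [setIntegral_const, smul_eq_mul] at hIB
        have hIB2 : (∫ x in Metric.closedBall p rB, ‖w x‖^2) ≤ ∫ x : R3, ‖w x‖^2 :=
          setIntegral_le_integral hw2 (Eventually.of_forall fun x => by positivity)
        have hIB3 : (∫ x : R3, ‖w x‖^2) ≤ H1sq w := by
          have hnn : (0:ℝ) ≤ ∫ x : R3, ‖fderiv ℝ w x‖^2 := integral_nonneg fun x => by positivity
          unfold H1sq; linarith
        calc volB * (m (‖x₀‖ + c))^2 ≤ ∫ x in Metric.closedBall p rB, ‖w x‖^2 := hIB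
          _ ≤ (Ebar t)^2 := le_trans hIB2 (le_trans hIB3 hH1w)
      refine csSup_le ⟨0, Or.inl rfl⟩ ?_
      rintro r (rfl | ⟨hr0, hr⟩)
      · exact norm_nonneg x₀
      · by_contra hcon
        push_neg at hcon
        have hmle : m (r + c) ≤ m (‖x₀‖ + c) :=
          hm_anti _ _ hx₀c_nn (by linarith)
        have hsq : volB * (m (r+c))^2 ≤ volB * (m (‖x₀‖+c))^2 :=
          mul_le_mul_of_nonneg_left
            (pow_le_pow_left₀ (hm_nonneg _ (add_nonneg hr0 hc0)) hmle 2) hvolB.le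
        linarith [hr, hchain, hsq]
    -- conclusion
    set hfun : R3 → ℂ := fun x => Complex.exp (-(θ₀:ℂ) * Complex.I) * u x
      - ((Q (x - x₀) * Ψ x : ℝ) : ℂ) with hfundef
    -- properties of the truncated translate
    have hΨb : ∀ x : R3, |Ψ x| ≤ 1 := fun x =>
      abs_le.2 ⟨by linarith [(hΨrange x).1], (hΨrange x).2⟩
    have h1Ψ : ∀ x : R3, |1 - Ψ x| ≤ 1 := fun x =>
      abs_le.2 ⟨by linarith [(hΨrange x).2], by linarith [(hΨrange x).1]⟩
    have hgTd : Differentiable ℝ (fun x : R3 => Q (x - x₀) * Ψ x) :=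
      (hQdiff.comp (differentiable_id.sub_const x₀)).mul hΨdiff
    have hhd : Differentiable ℝ hfun :=
      ((differentiable_const _).mul hud).sub (Complex.ofRealCLM.differentiable.comp hgTd)
    have hgTb : ∀ x : R3, |Q (x - x₀) * Ψ x| ≤ CQ * Real.exp ‖x₀‖ * Real.exp (-‖x‖) := by
      intro x
      rw [abs_mul, abs_of_pos (hQpos _)]
      calc Q (x-x₀) * |Ψ x| ≤ Q (x-x₀) * 1 :=
            mul_le_mul_of_nonneg_left (hΨb x) (hQpos _).le
        _ = Q (x - x₀) := mul_one _
        _ ≤ _ := hQTle x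
    have hh_norm : ∀ x : R3, ‖hfun x‖ ≤ ‖u x‖ + CQ * Real.exp ‖x₀‖ * Real.exp (-‖x‖) := by
      intro x
      refine (norm_sub_le _ _).trans ?_
      rw [norm_mul, norm_exp_neg_I, one_mul, Complex.norm_real, Real.norm_eq_abs]
      exact add_le_add (le_refl _) (hgTb x)
    have hh2 : Integrable (fun x => ‖hfun x‖^2) := by
      refine integrable_of_bound (hhd.continuous.norm.pow 2).aestronglyMeasurable hu2 2
        (2 * (CQ * Real.exp ‖x₀‖)^2) fun x => ?_
      rw [abs_of_nonneg (by positivity)]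
      exact sq_bound_of_le (by simpa [mul_assoc] using hh_norm x) (norm_nonneg (hfun x))
        (norm_nonneg (u x)) (by positivity : (0:ℝ) ≤ CQ * Real.exp ‖x₀‖)
        (Real.exp_nonneg _) (exp_neg_norm_le_one x)
    have hh4 : Integrable (fun x => ‖hfun x‖^4) := by
      refine integrable_of_bound (hhd.continuous.norm.pow 4).aestronglyMeasurable hu4 8
        (8 * (CQ * Real.exp ‖x₀‖)^4) fun x => ?_
      rw [abs_of_nonneg (by positivity)]
      have hB : (0:ℝ) ≤ CQ * Real.exp ‖x₀‖ := by positivity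
      have h4 : ‖hfun x‖^4 ≤ (‖u x‖ + (CQ * Real.exp ‖x₀‖) * Real.exp (-‖x‖))^4 :=
        pow_le_pow_left₀ (norm_nonneg _) (by simpa [mul_assoc] using hh_norm x) 4
      refine h4.trans ?_
      have hq := quartic_bound (‖u x‖) ((CQ * Real.exp ‖x₀‖) * Real.exp (-‖x‖))
        (norm_nonneg _) (by positivity)
      have he0 := Real.exp_nonneg (-‖x‖)
      have he1 := exp_neg_norm_le_one x
      have e3 : Real.exp (-‖x‖)^4 ≤ Real.exp (-‖x‖) := by
        have := pow_le_pow_of_le_one he0 he1 (by norm_num : 1 ≤ 4)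
        simpa using this
      have he4 : ((CQ * Real.exp ‖x₀‖) * Real.exp (-‖x‖))^4
          ≤ (CQ * Real.exp ‖x₀‖)^4 * Real.exp (-‖x‖) := by
        calc ((CQ * Real.exp ‖x₀‖) * Real.exp (-‖x‖))^4
            = (CQ * Real.exp ‖x₀‖)^4 * Real.exp (-‖x‖)^4 := by ring
          _ ≤ (CQ * Real.exp ‖x₀‖)^4 * Real.exp (-‖x‖) :=
              mul_le_mul_of_nonneg_left e3 (by positivity)
      nlinarith [hq, he4]
    have hgT' : ∀ x : R3, HasFDerivAt (fun y : R3 => Q (y - x₀) * Ψ y)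
        (Q (x - x₀) • fderiv ℝ Ψ x + Ψ x • fderiv ℝ Q (x - x₀)) x :=
      fun x => (haveQT x).mul (hΨdiff x).hasFDerivAt
    have hgT'b : ∀ x : R3, ‖Q (x - x₀) • fderiv ℝ Ψ x + Ψ x • fderiv ℝ Q (x - x₀)‖
        ≤ (CQ * C₁ + CG) * Real.exp ‖x₀‖ * Real.exp (-‖x‖) := by
      intro x
      refine (norm_add_le _ _).trans ?_
      have h1 : ‖Q (x - x₀) • fderiv ℝ Ψ x‖ ≤ (CQ * Real.exp ‖x₀‖ * Real.exp (-‖x‖)) * C₁ := by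
        rw [norm_smul, Real.norm_eq_abs, abs_of_pos (hQpos _)]
        exact mul_le_mul (hQTle x) (hC₁ x) (norm_nonneg _) (by positivity)
      have h2 : ‖Ψ x • fderiv ℝ Q (x - x₀)‖ ≤ CG * Real.exp ‖x₀‖ * Real.exp (-‖x‖) := by
        rw [norm_smul, Real.norm_eq_abs]
        calc |Ψ x| * ‖fderiv ℝ Q (x-x₀)‖ ≤ 1 * ‖fderiv ℝ Q (x-x₀)‖ :=
              mul_le_mul_of_nonneg_right (hΨb x) (norm_nonneg _)
          _ = ‖fderiv ℝ Q (x-x₀)‖ := one_mul _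
          _ ≤ _ := hQT'le x
      have hring : (CQ * Real.exp ‖x₀‖ * Real.exp (-‖x‖)) * C₁
          + CG * Real.exp ‖x₀‖ * Real.exp (-‖x‖)
          = (CQ * C₁ + CG) * Real.exp ‖x₀‖ * Real.exp (-‖x‖) := by ring
      linarith
    have hhF : ∀ x : R3, fderiv ℝ hfun x = Complex.exp (-(θ₀:ℂ) * Complex.I) • fderiv ℝ u x
        - Complex.ofRealCLM.comp (Q (x - x₀) • fderiv ℝ Ψ x + Ψ x • fderiv ℝ Q (x - x₀)) := by
      intro x
      exact (((hud x).hasFDerivAt.const_mul _).sub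
        (Complex.ofRealCLM.hasFDerivAt.comp x (hgT' x))).fderiv
    have hh'b : ∀ x : R3, ‖fderiv ℝ hfun x‖
        ≤ ‖fderiv ℝ u x‖ + (CQ * C₁ + CG) * Real.exp ‖x₀‖ * Real.exp (-‖x‖) := by
      intro x
      rw [hhF x]
      refine (norm_sub_le _ _).trans ?_
      have e1 : ‖Complex.exp (-(θ₀:ℂ) * Complex.I) • fderiv ℝ u x‖ = ‖fderiv ℝ u x‖ := by
        rw [norm_smul (Complex.exp (-(θ₀:ℂ) * Complex.I)) (fderiv ℝ u x),
          norm_exp_neg_I, one_mul]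
      rw [e1, norm_ofReal_comp]
      exact add_le_add (le_refl _) (hgT'b x)
    have hh2' : Integrable (fun x => ‖fderiv ℝ hfun x‖^2) := by
      refine integrable_of_bound
        (((measurable_fderiv ℝ hfun).norm.pow_const 2).aestronglyMeasurable) hugrad2 2
        (2 * ((CQ * C₁ + CG) * Real.exp ‖x₀‖)^2) fun x => ?_
      rw [abs_of_nonneg (by positivity)]
      exact sq_bound_of_le (by simpa [mul_assoc] using hh'b x) (norm_nonneg _)
        (norm_nonneg _) (by positivity : (0:ℝ) ≤ (CQ * C₁ + CG) * Real.exp ‖x₀‖)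
        (Real.exp_nonneg _) (exp_neg_norm_le_one x)
    refine ⟨x₀, θ₀, hfun, fun x => by simp only [hfundef]; ring, ?_, ?_, ?_⟩
    · -- MemH10
      refine ⟨hhd, hh2, hh4, hh2', ?_⟩
      filter_upwards [huΘ] with x hx hxΘ
      simp only [hfundef]
      rw [hx hxΘ, hΨU x (hΘU hxΘ)]
      simp
    · -- H1 bound
      set g1 : R3 → ℂ := fun x => ((Q (x - x₀) * (1 - Ψ x) : ℝ) : ℂ) with hg1def
      set w' : R3 → ℂ := fun x => Complex.exp (-(θ₀:ℂ) * Complex.I) * w x with hw'def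
      have hcc : Complex.exp (-(θ₀:ℂ)*Complex.I) * Complex.exp ((θ₀:ℂ)*Complex.I) = 1 := by
        rw [← Complex.exp_add, show -(θ₀:ℂ)*Complex.I + (θ₀:ℂ)*Complex.I = 0 by ring,
          Complex.exp_zero]
      have hsplit : hfun = fun x => w' x + g1 x := by
        funext x
        simp only [hfundef, hw'def, hg1def, hwdef]
        push_cast
        linear_combination (Q (x - x₀) : ℂ) * hcc
      have hg1r : Differentiable ℝ (fun x : R3 => Q (x - x₀) * (1 - Ψ x)) :=
        (hQdiff.comp (differentiable_id.sub_const x₀)).mul ((differentiable_const 1).sub hΨdiff)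
      have hg1d : Differentiable ℝ g1 := Complex.ofRealCLM.differentiable.comp hg1r
      have hw'd : Differentiable ℝ w' := (differentiable_const _).mul hwd
      have hw'norm : ∀ x : R3, ‖w' x‖ = ‖w x‖ := fun x => by
        simp only [hw'def]; rw [norm_mul, norm_exp_neg_I, one_mul]
      have hw'F : ∀ x : R3, fderiv ℝ w' x = Complex.exp (-(θ₀:ℂ) * Complex.I) • fderiv ℝ w x :=
        fun x => ((hwd x).hasFDerivAt.const_mul _).fderiv
      have hw'Fnorm : ∀ x : R3, ‖fderiv ℝ w' x‖ = ‖fderiv ℝ w x‖ := by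
        intro x
        rw [hw'F x, norm_smul (Complex.exp (-(θ₀:ℂ)*Complex.I)) (fderiv ℝ w x),
          norm_exp_neg_I, one_mul]
      have hw'2 : Integrable (fun x => ‖w' x‖^2) := by
        have heq : (fun x => ‖w' x‖^2) = fun x => ‖w x‖^2 := funext fun x => by rw [hw'norm x]
        rw [heq]; exact hw2
      have hw'2' : Integrable (fun x => ‖fderiv ℝ w' x‖^2) := by
        have heq : (fun x => ‖fderiv ℝ w' x‖^2) = fun x => ‖fderiv ℝ w x‖^2 :=
          funext fun x => by rw [hw'Fnorm x]
        rw [heq]; exact hw2'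
      -- bounds for g1
      have hg1b : ∀ x : R3, ‖g1 x‖ ≤ CQ * Real.exp ‖x₀‖ * Real.exp (-‖x‖) := by
        intro x
        have : ‖g1 x‖ = |Q (x-x₀) * (1 - Ψ x)| := by
          simp only [hg1def]; rw [Complex.norm_real, Real.norm_eq_abs]
        rw [this, abs_mul, abs_of_pos (hQpos _)]
        calc Q (x-x₀) * |1 - Ψ x| ≤ Q (x-x₀) * 1 :=
              mul_le_mul_of_nonneg_left (h1Ψ x) (hQpos _).le
          _ = Q (x - x₀) := mul_one _
          _ ≤ _ := hQTle x
      have hg12 : Integrable (fun x => ‖g1 x‖^2) := by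
        refine integrable_of_exp_bound ((hg1d.continuous.norm.pow 2).aestronglyMeasurable)
          ((CQ * Real.exp ‖x₀‖)^2) fun x => ?_
        rw [abs_of_nonneg (by positivity)]
        have h1 := hg1b x
        have he0 := Real.exp_nonneg (-‖x‖)
        have he1 := exp_neg_norm_le_one x
        have hB : (0:ℝ) ≤ CQ * Real.exp ‖x₀‖ := by positivity
        nlinarith [norm_nonneg (g1 x), sq_nonneg (Real.exp (-‖x‖)),
          mul_nonneg (mul_nonneg hB hB) (mul_nonneg he0 (by linarith : (0:ℝ) ≤ 1 - Real.exp (-‖x‖)))]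
      have hΨ1' : ∀ x : R3, HasFDerivAt (fun y : R3 => 1 - Ψ y) (-fderiv ℝ Ψ x) x := by
        intro x
        have := (hasFDerivAt_const (1:ℝ) x).sub (hΨdiff x).hasFDerivAt
        rw [zero_sub] at this
        exact this
      have hg1r' : ∀ x : R3, HasFDerivAt (fun y : R3 => Q (y - x₀) * (1 - Ψ y))
          (Q (x - x₀) • (-fderiv ℝ Ψ x) + (1 - Ψ x) • fderiv ℝ Q (x - x₀)) x :=
        fun x => (haveQT x).mul (hΨ1' x)
      have hg1F : ∀ x : R3, fderiv ℝ g1 x = Complex.ofRealCLM.comp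
          (Q (x - x₀) • (-fderiv ℝ Ψ x) + (1 - Ψ x) • fderiv ℝ Q (x - x₀)) :=
        fun x => (Complex.ofRealCLM.hasFDerivAt.comp x (hg1r' x)).fderiv
      have hg1'b : ∀ x : R3, ‖fderiv ℝ g1 x‖
          ≤ (CQ * C₁ + CG) * Real.exp (-‖x - x₀‖) := by
        intro x
        rw [hg1F x, norm_ofReal_comp]
        refine (norm_add_le _ _).trans ?_
        have h1 : ‖Q (x - x₀) • (-fderiv ℝ Ψ x)‖ ≤ (CQ * Real.exp (-‖x - x₀‖)) * C₁ := by
          rw [norm_smul, Real.norm_eq_abs, abs_of_pos (hQpos _), norm_neg]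
          exact mul_le_mul (hCQb _) (hC₁ x) (norm_nonneg _) (by positivity)
        have h2 : ‖(1 - Ψ x) • fderiv ℝ Q (x - x₀)‖ ≤ CG * Real.exp (-‖x - x₀‖) := by
          rw [norm_smul, Real.norm_eq_abs]
          calc |1 - Ψ x| * ‖fderiv ℝ Q (x-x₀)‖ ≤ 1 * ‖fderiv ℝ Q (x-x₀)‖ :=
                mul_le_mul_of_nonneg_right (h1Ψ x) (norm_nonneg _)
            _ = ‖fderiv ℝ Q (x-x₀)‖ := one_mul _
            _ ≤ _ := hCGb _
        have hring : (CQ * Real.exp (-‖x - x₀‖)) * C₁ + CG * Real.exp (-‖x - x₀‖)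
            = (CQ * C₁ + CG) * Real.exp (-‖x - x₀‖) := by ring
        linarith
      have hg12' : Integrable (fun x => ‖fderiv ℝ g1 x‖^2) := by
        refine integrable_of_exp_bound
          (((measurable_fderiv ℝ g1).norm.pow_const 2).aestronglyMeasurable)
          (((CQ * C₁ + CG) * Real.exp ‖x₀‖)^2) fun x => ?_
        rw [abs_of_nonneg (by positivity)]
        have h1 : ‖fderiv ℝ g1 x‖ ≤ ((CQ * C₁ + CG) * Real.exp ‖x₀‖) * Real.exp (-‖x‖) := by
          refine (hg1'b x).trans ?_
          have := hexp_tr x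
          have hD : (0:ℝ) ≤ CQ * C₁ + CG := by positivity
          calc (CQ * C₁ + CG) * Real.exp (-‖x - x₀‖)
              ≤ (CQ * C₁ + CG) * (Real.exp ‖x₀‖ * Real.exp (-‖x‖)) :=
                mul_le_mul_of_nonneg_left this hD
            _ = ((CQ * C₁ + CG) * Real.exp ‖x₀‖) * Real.exp (-‖x‖) := by ring
        have he0 := Real.exp_nonneg (-‖x‖)
        have he1 := exp_neg_norm_le_one x
        have hB : (0:ℝ) ≤ (CQ * C₁ + CG) * Real.exp ‖x₀‖ := by positivity
        nlinarith [norm_nonneg (fderiv ℝ g1 x),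
          mul_nonneg (mul_nonneg hB hB) (mul_nonneg he0 (by linarith : (0:ℝ) ≤ 1 - Real.exp (-‖x‖)))]
      -- Minkowski
      rw [hsplit]
      refine (sqrtH1_add_le w' g1 hw'd hg1d hw'2 hg12 hw'2' hg12').trans ?_
      have hw'H1 : H1sq w' = H1sq w := by
        have i1 : (∫ x : R3, ‖w' x‖^2) = ∫ x : R3, ‖w x‖^2 :=
          integral_congr_ae (Eventually.of_forall fun x => by simp only []; rw [hw'norm x])
        have i2 : (∫ x : R3, ‖fderiv ℝ w' x‖^2) = ∫ x : R3, ‖fderiv ℝ w x‖^2 :=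
          integral_congr_ae (Eventually.of_forall fun x => by simp only []; rw [hw'Fnorm x])
        unfold H1sq; rw [i1, i2]
      have h1le : Real.sqrt (H1sq w') ≤ Ebar t := by rw [hw'H1]; exact hEb
      -- the tail bound for g1
      have hg1zero : ∀ x : R3, x ∉ Metric.closedBall (0:R3) ρ → g1 x = 0 := by
        intro x hx
        have hxK : x ∉ K := fun hk => hx (hKρ hk)
        simp only [hg1def, hΨK x hxK]
        norm_num
      have hg1Fzero : ∀ x : R3, x ∉ Metric.closedBall (0:R3) ρ → fderiv ℝ g1 x = 0 := by
        intro x hx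
        have hopen : IsOpen (Metric.closedBall (0:R3) ρ)ᶜ :=
          Metric.isClosed_closedBall.isOpen_compl
        have hev : g1 =ᶠ[nhds x] fun _ => (0:ℂ) := by
          filter_upwards [hopen.mem_nhds hx] with y hy
          exact hg1zero y hy
        rw [hev.fderiv_eq]
        exact fderiv_const_apply 0
      have hin : ∀ x ∈ Metric.closedBall (0:R3) ρ, ‖g1 x‖ ≤ CQ * Real.exp (ρ - Rbar t) := by
        intro x hx
        have hxρ : ‖x‖ ≤ ρ := by simpa [Metric.mem_closedBall, dist_zero_right] using hx
        have hdist : Rbar t - ρ ≤ ‖x - x₀‖ := by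
          have h1 := norm_sub_norm_le x₀ x
          have hsym : ‖x₀ - x‖ = ‖x - x₀‖ := norm_sub_rev _ _
          rw [hsym] at h1
          linarith [hx₀]
        have : ‖g1 x‖ = |Q (x-x₀) * (1 - Ψ x)| := by
          simp only [hg1def]; rw [Complex.norm_real, Real.norm_eq_abs]
        rw [this, abs_mul, abs_of_pos (hQpos _)]
        calc Q (x-x₀) * |1 - Ψ x| ≤ Q (x-x₀) * 1 :=
              mul_le_mul_of_nonneg_left (h1Ψ x) (hQpos _).le
          _ = Q (x - x₀) := mul_one _
          _ ≤ CQ * Real.exp (-‖x - x₀‖) := hCQb _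
          _ ≤ CQ * Real.exp (ρ - Rbar t) :=
              mul_le_mul_of_nonneg_left (Real.exp_le_exp.2 (by linarith)) hCQ0.le
      have hin' : ∀ x ∈ Metric.closedBall (0:R3) ρ,
          ‖fderiv ℝ g1 x‖ ≤ (CQ * C₁ + CG) * Real.exp (ρ - Rbar t) := by
        intro x hx
        have hxρ : ‖x‖ ≤ ρ := by simpa [Metric.mem_closedBall, dist_zero_right] using hx
        have hdist : Rbar t - ρ ≤ ‖x - x₀‖ := by
          have h1 := norm_sub_norm_le x₀ x
          have hsym : ‖x₀ - x‖ = ‖x - x₀‖ := norm_sub_rev _ _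
          rw [hsym] at h1
          linarith [hx₀]
        refine (hg1'b x).trans ?_
        exact mul_le_mul_of_nonneg_left (Real.exp_le_exp.2 (by linarith)) (by positivity)
      have hβnn : (0:ℝ) ≤ CQ * Real.exp (ρ - Rbar t) := by positivity
      have hγnn : (0:ℝ) ≤ (CQ * C₁ + CG) * Real.exp (ρ - Rbar t) := by positivity
      have hVnn : (0:ℝ) ≤ (volume (Metric.closedBall (0:R3) ρ)).toReal := ENNReal.toReal_nonneg
      have hIconst : ∀ k : ℝ, 0 ≤ k → Integrable
          ((Metric.closedBall (0:R3) ρ).indicator (fun _ => k)) := fun k _ =>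
        (integrable_indicator_iff measurableSet_closedBall).2
          (integrableOn_const measure_closedBall_lt_top.ne)
      have e2 : (∫ x : R3, ‖g1 x‖^2)
          ≤ (volume (Metric.closedBall (0:R3) ρ)).toReal * (CQ * Real.exp (ρ - Rbar t))^2 := by
        have hmono2 : ∀ x : R3, ‖g1 x‖^2
            ≤ (Metric.closedBall (0:R3) ρ).indicator (fun _ => (CQ * Real.exp (ρ - Rbar t))^2) x := by
          intro x
          by_cases hx : x ∈ Metric.closedBall (0:R3) ρ
          · rw [Set.indicator_of_mem hx]
            exact pow_le_pow_left₀ (norm_nonneg _) (hin x hx) 2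
          · rw [Set.indicator_of_notMem hx, hg1zero x hx]
            simp
        have hm := integral_mono_of_nonneg (Eventually.of_forall fun x => by positivity)
          (hIconst _ (by positivity)) (Eventually.of_forall hmono2)
        rwa [integral_indicator measurableSet_closedBall, setIntegral_const, smul_eq_mul] at hm
      have e3 : (∫ x : R3, ‖fderiv ℝ g1 x‖^2)
          ≤ (volume (Metric.closedBall (0:R3) ρ)).toReal
            * ((CQ * C₁ + CG) * Real.exp (ρ - Rbar t))^2 := by
        have hmono2 : ∀ x : R3, ‖fderiv ℝ g1 x‖^2
            ≤ (Metric.closedBall (0:R3) ρ).indicator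
              (fun _ => ((CQ * C₁ + CG) * Real.exp (ρ - Rbar t))^2) x := by
          intro x
          by_cases hx : x ∈ Metric.closedBall (0:R3) ρ
          · rw [Set.indicator_of_mem hx]
            exact pow_le_pow_left₀ (norm_nonneg _) (hin' x hx) 2
          · rw [Set.indicator_of_notMem hx, hg1Fzero x hx]
            simp
        have hm := integral_mono_of_nonneg (Eventually.of_forall fun x => by positivity)
          (hIconst _ (by positivity)) (Eventually.of_forall hmono2)
        rwa [integral_indicator measurableSet_closedBall, setIntegral_const, smul_eq_mul] at hm
      have h2le : Real.sqrt (H1sq g1) ≤ CK * Real.exp (ρ - Rbar t) := by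
        have hH1g : H1sq g1 ≤ (volume (Metric.closedBall (0:R3) ρ)).toReal
            * (CQ * Real.exp (ρ - Rbar t))^2
            + (volume (Metric.closedBall (0:R3) ρ)).toReal
            * ((CQ * C₁ + CG) * Real.exp (ρ - Rbar t))^2 := add_le_add e2 e3
        have hsq : CK^2 = (volume (Metric.closedBall (0:R3) ρ)).toReal
            * (CQ^2 + (CG + CQ*C₁)^2) := by
          rw [hCKdef]
          exact Real.sq_sqrt (mul_nonneg hVnn (by positivity))
        have hCKe : (CK * Real.exp (ρ - Rbar t))^2
            = (volume (Metric.closedBall (0:R3) ρ)).toReal * (CQ * Real.exp (ρ - Rbar t))^2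
            + (volume (Metric.closedBall (0:R3) ρ)).toReal
              * ((CQ * C₁ + CG) * Real.exp (ρ - Rbar t))^2 := by
          linear_combination (Real.exp (ρ - Rbar t))^2 * hsq
        calc Real.sqrt (H1sq g1) ≤ Real.sqrt ((CK * Real.exp (ρ - Rbar t))^2) :=
              Real.sqrt_le_sqrt (by rw [hCKe]; exact hH1g)
          _ = CK * Real.exp (ρ - Rbar t) := Real.sqrt_sq (by positivity)
      refine (add_le_add h1le h2le).trans ?_
      have : εtil δ = Ebar t + CK * Real.exp (ρ - Rbar t) := by
        simp only [hεtildef]; rfl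
      rw [this]
    · -- Rtil bound
      show Rbar (d' δ) ≤ ‖x₀‖
      rw [← htdef]
      exact hx₀
end
end

section
/- Let Q : ℝ³ → ℝ be a continuous positive function with constant C₀ > 0 such that Q(x) ≤ C₀ e^{−|x|}/|x| for all |x| > 1, and with ∫_{|y|<1} Q(y)² dy > 0. Then there exists C₁ > 0 such that for every d ∈ ℝ³ with |d| ≥ C₁ and all θ, θ₁ ∈ ℝ: ∫_{|y|<1} | e^{iθ} Q(y) − e^{iθ₁} Q(y − d) |² dy ≥ (1/2) ∫_{|y|<1} Q(y)² dy. (Consequently, if two phase-translated copies of Q are close in L² on a unit ball, their translation parameters differ by at most C₁.) -/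
/-!
Far from the origin `Q` is uniformly small, so once `|d|` is large the translate `Q (· - d)` is
at most `ε` on the unit ball. Pointwise `|a - b|² ≥ (|a| - |b|)² ≥ |a|² - 2ε|a|` whenever
`|b| ≤ ε`, and integrating over the ball gives `∫ Q² - 2ε ∫ |Q|`, which is at least
`½ ∫ Q²` for `ε` small.
-/

noncomputable section

open MeasureTheory Real Filter Topology

theorem exists_forall_le_of_le_mul_exp_neg_div {E : Type*} [SeminormedAddCommGroup E]
    {Q : E → ℝ} {C₀ ε : ℝ} (hε : 0 < ε)
    (hdecay : ∀ x : E, 1 < ‖x‖ → Q x ≤ C₀ * exp (-‖x‖) / ‖x‖) :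
    ∃ R, ∀ x : E, R ≤ ‖x‖ → Q x ≤ ε := by
  have hlim : Tendsto (fun r : ℝ => C₀ * exp (-r) / r) atTop (𝓝 0) := by
    simpa using ((tendsto_exp_neg_atTop_nhds_zero.const_mul C₀).div_atTop tendsto_id)
  obtain ⟨R, hR⟩ := eventually_atTop.1 (hlim.eventually (ge_mem_nhds hε))
  exact ⟨max 2 R, fun x hx =>
    (hdecay x (by linarith [le_max_left 2 R])).trans (hR _ ((le_max_right 2 R).trans hx))⟩

theorem norm_sq_sub_two_mul_le_norm_sub_sq {E : Type*} [SeminormedAddCommGroup E]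
    {a b : E} {ε : ℝ} (hb : ‖b‖ ≤ ε) : ‖a‖ ^ 2 - 2 * ε * ‖a‖ ≤ ‖a - b‖ ^ 2 := by
  have h := abs_norm_sub_norm_le a b
  nlinarith [norm_nonneg a, norm_nonneg b, sq_abs (‖a‖ - ‖b‖), abs_nonneg (‖a‖ - ‖b‖)]

theorem setIntegral_norm_sq_sub_le_setIntegral_norm_sub_sq {α E : Type*} [MeasurableSpace α]
    [NormedAddCommGroup E] {μ : Measure α} {s : Set α} (hs : MeasurableSet s) {f g : α → E}
    {ε : ℝ} (hf : IntegrableOn (fun y => ‖f y‖) s μ)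
    (hf₂ : IntegrableOn (fun y => ‖f y‖ ^ 2) s μ)
    (hfg : IntegrableOn (fun y => ‖f y - g y‖ ^ 2) s μ) (hg : ∀ y ∈ s, ‖g y‖ ≤ ε) :
    ∫ y in s, ‖f y‖ ^ 2 ∂μ - 2 * ε * ∫ y in s, ‖f y‖ ∂μ ≤ ∫ y in s, ‖f y - g y‖ ^ 2 ∂μ := by
  rw [← integral_const_mul, ← integral_sub hf₂ (hf.const_mul _)]
  exact setIntegral_mono_on (hf₂.sub (hf.const_mul _)) hfg hs
    fun y hy => norm_sq_sub_two_mul_le_norm_sub_sq (hg y hy)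

theorem separated_translates_L2_lower_bound_general
    (Q : R3 → ℝ) (hQcont : Continuous Q) (hQpos : ∀ x : R3, 0 < Q x)
    (C₀ : ℝ)
    (hdecay : ∀ x : R3, 1 < ‖x‖ → Q x ≤ C₀ * Real.exp (-‖x‖) / ‖x‖)
    (hQL2pos : 0 < ∫ y in Metric.ball (0 : R3) 1, (Q y) ^ 2) :
    ∃ C₁ > (0 : ℝ), ∀ (d : R3) (θ θ₁ : ℝ), C₁ ≤ ‖d‖ →
      (1 / 2) * (∫ y in Metric.ball (0 : R3) 1, (Q y) ^ 2)
        ≤ ∫ y in Metric.ball (0 : R3) 1,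
            ‖Complex.exp ((θ : ℂ) * Complex.I) * (Q y : ℂ)
              - Complex.exp ((θ₁ : ℂ) * Complex.I) * (Q (y - d) : ℂ)‖ ^ 2 := by
  set I := ∫ y in Metric.ball (0 : R3) 1, (Q y) ^ 2
  set M := ∫ y in Metric.ball (0 : R3) 1, |Q y|
  have hM : 0 ≤ M := integral_nonneg fun y => abs_nonneg _
  obtain ⟨ε, hε, hεM⟩ : ∃ ε > 0, 2 * ε * M ≤ I / 2 := by
    refine ⟨I / (4 * M + 1), by positivity, ?_⟩
    field_simp
    nlinarith
  obtain ⟨R, hR⟩ := exists_forall_le_of_le_mul_exp_neg_div hε hdecay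
  refine ⟨max 1 (R + 1), by positivity, fun d θ θ₁ hd => ?_⟩
  have hball : ∀ f : R3 → ℝ, Continuous f → IntegrableOn f (Metric.ball 0 1) :=
    fun f hf => (hf.locallyIntegrable.integrableOn_isCompact
      (isCompact_closedBall 0 1)).mono_set Metric.ball_subset_closedBall
  have hsmall : ∀ y ∈ Metric.ball (0 : R3) 1,
      ‖Complex.exp ((θ₁ : ℂ) * Complex.I) * (Q (y - d) : ℂ)‖ ≤ ε := by
    intro y hy
    have hy : ‖y‖ < 1 := mem_ball_zero_iff.1 hy
    have hyd : R ≤ ‖y - d‖ := by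
      linarith [norm_sub_norm_le d y, norm_sub_rev d y, le_max_right 1 (R + 1)]
    simpa [Complex.norm_exp_ofReal_mul_I, abs_of_pos (hQpos _)] using hR _ hyd
  have hlower := setIntegral_norm_sq_sub_le_setIntegral_norm_sub_sq measurableSet_ball
    (f := fun y => Complex.exp ((θ : ℂ) * Complex.I) * (Q y : ℂ))
    (hball _ (by fun_prop)) (hball _ (by fun_prop)) (hball _ (by fun_prop)) hsmall
  simp only [norm_mul, Complex.norm_exp_ofReal_mul_I, one_mul, Complex.norm_real,
    Real.norm_eq_abs, sq_abs] at hlower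
  linarith

theorem separated_translates_L2_lower_bound
    (Q : R3 → ℝ) (hQcont : Continuous Q) (hQpos : ∀ x : R3, 0 < Q x)
    (C₀ : ℝ) (hC₀ : 0 < C₀)
    (hdecay : ∀ x : R3, 1 < ‖x‖ → Q x ≤ C₀ * Real.exp (-‖x‖) / ‖x‖)
    (hQL2pos : 0 < ∫ y in Metric.ball (0 : R3) 1, (Q y) ^ 2) :
    ∃ C₁ > (0 : ℝ), ∀ (d : R3) (θ θ₁ : ℝ), C₁ ≤ ‖d‖ →
      (1 / 2) * (∫ y in Metric.ball (0 : R3) 1, (Q y) ^ 2)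
        ≤ ∫ y in Metric.ball (0 : R3) 1,
            ‖Complex.exp ((θ : ℂ) * Complex.I) * (Q y : ℂ)
              - Complex.exp ((θ₁ : ℂ) * Complex.I) * (Q (y - d) : ℂ)‖ ^ 2 :=
  separated_translates_L2_lower_bound_general Q hQcont hQpos C₀ hdecay hQL2pos
end
end
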